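/- Any abelian subgroup of the n-qubit signed Pauli group that does not contain -I has order at most 2^n, and if it has order exactly 2^n it determines a unique pure state (the operator (1/2^n)∑_{g∈G} g has rank one). -/

import Mathlib

open Matrix Complex BigOperators

noncomputable def pauli : Fin 4 → Matrix (Fin 2) (Fin 2) ℂ
  | 0 => 1
  | 1 => !![0, 1; 1, 0]
  | 2 => !![0, -Complex.I; Complex.I, 0]
  | 3 => !![1, 0; 0, -1]

noncomputable def PauliOp (n : ℕ) (f : Fin n → Fin 4) :
    Matrix (Fin n → Fin 2) (Fin n → Fin 2) ℂ :=
  fun i j => ∏ k, pauli (f k) (i k) (j k)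

lemma pauli_sq (a : Fin 4) : pauli a * pauli a = 1 := by
  fin_cases a <;>
  · ext i j
    fin_cases i <;> fin_cases j <;>
      simp [pauli, Matrix.mul_apply, Fin.sum_univ_two, Matrix.one_apply, Complex.I_mul_I]

lemma trace_pauli (a : Fin 4) : (pauli a).trace = if a = 0 then 2 else 0 := by
  fin_cases a <;> simp [pauli, Matrix.trace_fin_two]

lemma prod_one_apply {n : ℕ} (i j : Fin n → Fin 2) :
    (∏ k, (1 : Matrix (Fin 2) (Fin 2) ℂ) (i k) (j k)) = (1 : Matrix (Fin n → Fin 2) (Fin n → Fin 2) ℂ) i j := by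
  by_cases h : i = j
  · subst h; simp [Matrix.one_apply]
  · obtain ⟨k, hk⟩ := Function.ne_iff.mp h
    rw [Finset.prod_eq_zero (Finset.mem_univ k) (by simp [Matrix.one_apply, hk]),
      Matrix.one_apply_ne h]

lemma PauliOp_mul_self (n : ℕ) (f : Fin n → Fin 4) : PauliOp n f * PauliOp n f = 1 := by
  ext i j
  rw [Matrix.mul_apply]
  simp only [PauliOp]
  calc ∑ m : Fin n → Fin 2, ((∏ k, pauli (f k) (i k) (m k)) * ∏ k, pauli (f k) (m k) (j k))
      = ∑ m ∈ Fintype.piFinset (fun _ : Fin n => (Finset.univ : Finset (Fin 2))),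
          ∏ k, (pauli (f k) (i k) (m k) * pauli (f k) (m k) (j k)) := by
        rw [Fintype.piFinset_univ]
        exact Finset.sum_congr rfl fun m _ => (Finset.prod_mul_distrib).symm
    _ = ∏ k, ∑ b, pauli (f k) (i k) b * pauli (f k) b (j k) :=
        Finset.sum_prod_piFinset _ fun k b => pauli (f k) (i k) b * pauli (f k) b (j k)
    _ = ∏ k, (pauli (f k) * pauli (f k)) (i k) (j k) := by
        simp [Matrix.mul_apply]
    _ = ∏ k, (1 : Matrix (Fin 2) (Fin 2) ℂ) (i k) (j k) := by simp [pauli_sq]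
    _ = _ := prod_one_apply i j

lemma PauliOp_zero (n : ℕ) (f : Fin n → Fin 4) (hf : ∀ k, f k = 0) : PauliOp n f = 1 := by
  ext i j
  simp only [PauliOp]
  rw [← prod_one_apply i j]
  exact Finset.prod_congr rfl fun k _ => by rw [hf k]; rfl

lemma trace_PauliOp_ne (n : ℕ) (f : Fin n → Fin 4) (k0 : Fin n) (hk0 : f k0 ≠ 0) :
    (PauliOp n f).trace = 0 := by
  unfold Matrix.trace Matrix.diag PauliOp
  calc ∑ i : Fin n → Fin 2, ∏ k, pauli (f k) (i k) (i k)
      = ∑ i ∈ Fintype.piFinset (fun _ : Fin n => (Finset.univ : Finset (Fin 2))),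
          ∏ k, pauli (f k) (i k) (i k) := by rw [Fintype.piFinset_univ]
    _ = ∏ k, ∑ b, pauli (f k) b b :=
        Finset.sum_prod_piFinset _ fun k b => pauli (f k) b b
    _ = 0 := Finset.prod_eq_zero (Finset.mem_univ k0) (by
        have := trace_pauli (f k0)
        rw [if_neg hk0] at this
        simpa [Matrix.trace, Matrix.diag] using this)

lemma rank_idem {m : Type*} [Fintype m] [DecidableEq m] (A : Matrix m m ℂ)
    (h : A * A = A) : ((A.rank : ℂ)) = A.trace := by
  have hproj : LinearMap.IsProj (LinearMap.range A.mulVecLin) A.mulVecLin := by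
    constructor
    · intro x; exact LinearMap.mem_range_self _ x
    · rintro x ⟨y, rfl⟩
      simp only [Matrix.mulVecLin_apply]
      rw [Matrix.mulVec_mulVec, h]
  have ht := hproj.trace
  have h2 : LinearMap.trace ℂ (m → ℂ) A.mulVecLin = A.trace := by
    rw [LinearMap.trace_eq_matrix_trace ℂ (Pi.basisFun ℂ m), LinearMap.toMatrix_eq_toMatrix']
    congr 1
    exact LinearMap.toMatrix'_toLin' A
  rw [h2] at ht
  rw [ht]
  rfl

/-- An abelian subgroup of the signed Pauli group not containing -I has order
at most 2^n, and when the order is exactly 2^n the group average has rank one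
(it determines a unique pure state). -/
theorem stabilizer_group_order_bound (n : ℕ)
    (G : Finset (Matrix (Fin n → Fin 2) (Fin n → Fin 2) ℂ))
    (hpauli : ∀ P ∈ G, ∃ (s : ZMod 2) (f : Fin n → Fin 4),
      P = ((-1 : ℂ) ^ s.val) • PauliOp n f)
    (hone : (1 : Matrix (Fin n → Fin 2) (Fin n → Fin 2) ℂ) ∈ G)
    (hmul : ∀ P ∈ G, ∀ Q ∈ G, P * Q ∈ G)
    (hcomm : ∀ P ∈ G, ∀ Q ∈ G, P * Q = Q * P)
    (hnegI : (-1 : Matrix (Fin n → Fin 2) (Fin n → Fin 2) ℂ) ∉ G) :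
    G.card ≤ 2 ^ n ∧
    (G.card = 2 ^ n → (((2 : ℂ) ^ n)⁻¹ • ∑ g ∈ G, g).rank = 1) := by
  classical
  have hsq : ∀ g ∈ G, g * g = 1 := by
    intro g hg
    obtain ⟨s, f, rfl⟩ := hpauli g hg
    rw [smul_mul_smul_comm, PauliOp_mul_self, ← pow_add, ← two_mul, pow_mul]
    norm_num
  have hcard0 : (0:ℕ) < G.card := Finset.card_pos.mpr ⟨1, hone⟩
  set S : Matrix (Fin n → Fin 2) (Fin n → Fin 2) ℂ := ∑ g ∈ G, g with hS
  -- trace of every element of G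
  have htrg : ∀ g ∈ G, g.trace = if g = 1 then (2:ℂ)^n else 0 := by
    intro g hg
    have htr1 : (1 : Matrix (Fin n → Fin 2) (Fin n → Fin 2) ℂ).trace = (2:ℂ)^n := by
      rw [Matrix.trace_one]
      simp [Fintype.card_fun]
    obtain ⟨s, f, hgf⟩ := hpauli g hg
    by_cases hf : ∀ k, f k = 0
    · rw [PauliOp_zero n f hf] at hgf
      have hvlt : s.val < 2 := ZMod.val_lt s
      have hv : s.val = 0 ∨ s.val = 1 := by omega
      rcases hv with h0 | h1
      · rw [h0] at hgf; simp at hgf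
        subst hgf
        rw [if_pos rfl, htr1]
      · exfalso
        rw [h1] at hgf
        simp at hgf
        rw [← hgf] at hnegI
        exact hnegI hg
    · push_neg at hf
      obtain ⟨k0, hk0⟩ := hf
      have h0 : g.trace = 0 := by
        rw [hgf, Matrix.trace_smul, trace_PauliOp_ne n f k0 hk0, smul_zero]
      rw [h0]
      rw [if_neg ?_]
      intro h1
      rw [h1, htr1] at h0
      exact pow_ne_zero n two_ne_zero h0
  have htrS : S.trace = (2:ℂ)^n := by
    rw [hS, Matrix.trace_sum, Finset.sum_eq_single 1]
    · rw [htrg 1 hone, if_pos rfl]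
    · intro g hg hne
      rw [htrg g hg, if_neg hne]
    · intro h; exact absurd hone h
  have hSS : S * S = (G.card : ℂ) • S := by
    rw [hS, Finset.sum_mul_sum]
    have key : ∀ g ∈ G, ∑ h ∈ G, g * h = S := by
      intro g hg
      refine Finset.sum_nbij' (i := fun h => g * h) (j := fun p => g * p) ?_ ?_ ?_ ?_ ?_
      · intro a ha; exact hmul g hg a ha
      · intro a ha; exact hmul g hg a ha
      · intro a _; show g * (g * a) = a; rw [← mul_assoc, hsq g hg, one_mul]
      · intro a _; show g * (g * a) = a; rw [← mul_assoc, hsq g hg, one_mul]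
      · intro a _; rfl
    rw [Finset.sum_congr rfl key, Finset.sum_const, ← Nat.cast_smul_eq_nsmul (R := ℂ)]
  -- the idempotent
  set c : ℂ := (G.card : ℂ)⁻¹ with hc
  have hcne : (G.card : ℂ) ≠ 0 := Nat.cast_ne_zero.mpr hcard0.ne'
  have hQ : (c • S) * (c • S) = c • S := by
    rw [smul_mul_smul_comm, hSS, smul_smul]
    congr 1
    rw [hc]
    field_simp
  have hrk := rank_idem (c • S) hQ
  rw [Matrix.trace_smul, htrS] at hrk
  -- (rank : ℂ) = c * 2^n , i.e. rank * card = 2^n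
  have hnat : ((c • S).rank) * G.card = 2 ^ n := by
    rw [smul_eq_mul] at hrk
    have : ((((c • S).rank) * G.card : ℕ) : ℂ) = ((2:ℕ)^n : ℂ) := by
      push_cast
      rw [hrk, hc]
      field_simp
    exact_mod_cast this
  have hrpos : 0 < (c • S).rank := by
    rcases Nat.eq_zero_or_pos ((c • S).rank) with h | h
    · rw [h, zero_mul] at hnat
      exact absurd hnat.symm (pow_ne_zero n two_ne_zero)
    · exact h
  constructor
  · calc G.card = 1 * G.card := (one_mul _).symm
      _ ≤ (c • S).rank * G.card := Nat.mul_le_mul_right _ hrpos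
      _ = 2 ^ n := hnat
  · intro hcard
    have h2pos : 0 < 2 ^ n := Nat.pow_pos (by norm_num)
    have h1 : (c • S).rank = 1 := by
      have h' := hnat
      rw [hcard] at h'
      exact Nat.eq_of_mul_eq_mul_right h2pos (by rw [h', one_mul])
    have hcc : (G.card : ℂ) = (2:ℂ)^n := by rw [hcard]; push_cast; ring
    have hcS : c • S = ((2:ℂ)^n)⁻¹ • S := by rw [hc, hcc]
    rw [← hcS]
    exact h1
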